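/- arXiv:2002.05045 — 4 statements merged into one kernel-verified Lean document; each statement's English description precedes it below -/
import Mathlib

section
/- With the notation of the previous splitting (a := M₁/2, c := M₀/a with M₁ ≠ 0, M̃₀ := a/√δ + M₀, M̃₁ := -a/√δ, λ̃₀ := λ₀ + √δ, λ̃₁ := λ₀ - √δ + cδ), there exist constants C > 0 and δ₀ > 0 depending only on M₀, M₁ such that for all δ ∈ (0, δ₀]: |M̃₀ (λ̃₀ - λ₀)² + M̃₁ (λ̃₁ - λ₀)²| ≤ C δ, |λ̃ⱼ - λ₀| ≤ C √δ, and |M̃ⱼ| ≤ C/√δ for j = 0, 1. -/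
/-! Writing `t = √δ`, the `1/t` parts of the two residues cancel in the second moment, which is
exactly `3 M₀ t² - a c² t³`. All other estimates are the triangle inequality together with
`t³ ≤ t² ≤ t` for `t ≤ 1`, so `δ₀ = 1` works. -/

theorem double_pole_split_moment_eq {K : Type*} [Field K] {a t : K} (ha : a ≠ 0) (ht : t ≠ 0)
    (l M : K) :
    (a / t + M) * (l + t - l) ^ 2 + -(a / t) * (l - t + M / a * t ^ 2 - l) ^ 2 =
      3 * M * t ^ 2 - a * (M / a) ^ 2 * t ^ 3 := by
  field_simp
  ring

section NormLeOne

variable {𝕜 : Type*} [NormedField 𝕜] {t : 𝕜}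

theorem norm_mul_sq_sub_mul_pow_three_le (ht : ‖t‖ ≤ 1) (x y : 𝕜) :
    ‖x * t ^ 2 - y * t ^ 3‖ ≤ (‖x‖ + ‖y‖) * ‖t‖ ^ 2 := by
  have hcube : ‖t‖ ^ 3 ≤ ‖t‖ ^ 2 := pow_le_pow_of_le_one (norm_nonneg t) ht (by norm_num)
  calc ‖x * t ^ 2 - y * t ^ 3‖ ≤ ‖x‖ * ‖t‖ ^ 2 + ‖y‖ * ‖t‖ ^ 3 := by
        rw [← norm_pow, ← norm_pow, ← norm_mul, ← norm_mul]
        exact norm_sub_le _ _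
    _ ≤ (‖x‖ + ‖y‖) * ‖t‖ ^ 2 := by
        rw [add_mul]
        gcongr

theorem norm_neg_add_mul_sq_le (ht : ‖t‖ ≤ 1) (c : 𝕜) :
    ‖-t + c * t ^ 2‖ ≤ (1 + ‖c‖) * ‖t‖ := by
  have hsq : ‖t‖ ^ 2 ≤ ‖t‖ := pow_le_of_le_one (norm_nonneg t) ht (by norm_num)
  calc ‖-t + c * t ^ 2‖ ≤ ‖t‖ + ‖c‖ * ‖t‖ ^ 2 := by
        rw [← norm_pow, ← norm_mul, ← norm_neg t]
        exact norm_add_le _ _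
    _ ≤ (1 + ‖c‖) * ‖t‖ := by
        rw [add_mul, one_mul]
        gcongr

theorem norm_div_add_le (ht₀ : t ≠ 0) (ht : ‖t‖ ≤ 1) (a b : 𝕜) :
    ‖a / t + b‖ ≤ (‖a‖ + ‖b‖) / ‖t‖ := by
  have hb : ‖b‖ ≤ ‖b‖ / ‖t‖ := le_div_self (norm_nonneg b) (norm_pos_iff.2 ht₀) ht
  calc ‖a / t + b‖ ≤ ‖a‖ / ‖t‖ + ‖b‖ := by
        rw [← norm_div]
        exact norm_add_le _ _
    _ ≤ (‖a‖ + ‖b‖) / ‖t‖ := by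
        rw [add_div]
        gcongr

end NormLeOne

/-- Estimates on the splitting of a double pole into two simple poles. -/
theorem double_pole_splitting_estimates (l₀ M₀ M₁ : ℂ) (hM₁ : M₁ ≠ 0) :
    ∃ C > 0, ∃ δ₀ > 0, ∀ δ : ℝ, 0 < δ → δ ≤ δ₀ →
      let a : ℂ := M₁ / 2
      let c : ℂ := M₀ / a
      let Mt : Fin 2 → ℂ := ![a / (Real.sqrt δ : ℂ) + M₀, -(a / (Real.sqrt δ : ℂ))]
      let lt : Fin 2 → ℂ := ![l₀ + (Real.sqrt δ : ℂ), l₀ - (Real.sqrt δ : ℂ) + c * (δ : ℂ)]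
      ‖Mt 0 * (lt 0 - l₀) ^ 2 + Mt 1 * (lt 1 - l₀) ^ 2‖ ≤ C * δ ∧
        (∀ j : Fin 2, ‖lt j - l₀‖ ≤ C * Real.sqrt δ) ∧
        (∀ j : Fin 2, ‖Mt j‖ ≤ C / Real.sqrt δ) := by
  set a := M₁ / 2
  have ha : a ≠ 0 := div_ne_zero hM₁ two_ne_zero
  set c := M₀ / a
  set C := max (‖3 * M₀‖ + ‖a * c ^ 2‖) (max (1 + ‖c‖) (‖a‖ + ‖M₀‖))
  have hC₁ : ‖3 * M₀‖ + ‖a * c ^ 2‖ ≤ C := le_max_left _ _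
  have hC₂ : 1 + ‖c‖ ≤ C := (le_max_left _ _).trans (le_max_right _ _)
  have hC₃ : ‖a‖ + ‖M₀‖ ≤ C := (le_max_right _ _).trans (le_max_right _ _)
  refine ⟨C, by positivity, 1, one_pos, fun δ hδ hδ₁ => ?_⟩
  obtain ⟨s, hs, rfl⟩ : ∃ s : ℝ, 0 < s ∧ δ = s ^ 2 :=
    ⟨√δ, Real.sqrt_pos.2 hδ, (Real.sq_sqrt hδ.le).symm⟩
  have hnorm : ‖(s : ℂ)‖ = s := Complex.norm_of_nonneg hs.le
  have ht₀ : (s : ℂ) ≠ 0 := Complex.ofReal_ne_zero.2 hs.ne'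
  have ht : ‖(s : ℂ)‖ ≤ 1 := hnorm.trans_le (by nlinarith)
  simp only [Real.sqrt_sq hs.le, Complex.ofReal_pow, Fin.forall_fin_two, Matrix.cons_val_zero,
    Matrix.cons_val_one]
  refine ⟨?_, ⟨?_, ?_⟩, ?_, ?_⟩
  · rw [double_pole_split_moment_eq ha ht₀]
    exact (norm_mul_sq_sub_mul_pow_three_le ht _ _).trans (by rw [hnorm]; gcongr)
  · rw [add_sub_cancel_left, hnorm]
    exact le_mul_of_one_le_left hs.le ((le_add_of_nonneg_right (norm_nonneg c)).trans hC₂)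
  · rw [show l₀ - s + c * s ^ 2 - l₀ = -s + c * s ^ 2 by ring]
    exact (norm_neg_add_mul_sq_le ht c).trans (by rw [hnorm]; gcongr)
  · exact (norm_div_add_le ht₀ ht a M₀).trans (by rw [hnorm]; gcongr)
  · rw [norm_neg, norm_div, hnorm]
    exact div_le_div_of_nonneg_right ((le_add_of_nonneg_right (norm_nonneg M₀)).trans hC₃) hs.le
end

section
/- Let λ₀ ∈ ℂ, m ≥ 1, and suppose complex numbers λ̃₀, …, λ̃_{m-1}, M̃₀, …, M̃_{m-1}, M₀, …, M_{m-1} satisfy: |∑_{j=0}^{m-1}(λ̃_j - λ₀)^s M̃_j - M_s| ≤ δ for s = 0,…,m-1; |∑_{j=0}^{m-1}(λ̃_j - λ₀)^s M̃_j| ≤ δ for s = m,…,2(m-1); |λ̃_j - λ₀| ≤ δ^{1/m} and |M̃_j| ≤ δ^{(1-m)/m} for all j. Let c₀ > 0 and suppose λ ∈ ℂ satisfies |λ - λ₀| ≥ c₀ and |λ - λ̃_j| ≥ c₀ for all j. Then |∑_{j=0}^{m-1} M̃_j/(λ - λ̃_j) - ∑_{s=0}^{m-1} M_s/(λ - λ₀)^{s+1}|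 ≤ C δ, where C depends only on m, c₀, and an upper bound on |λ - λ₀|. -/
/-!
Expand each simple pole geometrically around `l₀` up to order `2m - 2`. The coefficient of
`(l - l₀)^{-(s+1)}` is then the `s`-th moment `∑ j, (lt j - l₀)^s * Mt j`, which is `δ`-close to
`M s` for `s < m` and `δ`-small for `m ≤ s ≤ 2m - 2`. Each remainder term carries
`(lt j - l₀)^{2m-1} * Mt j`, of size at most `δ^{(2m-1)/m} * δ^{(1-m)/m} = δ`. All denominators are
at least `min c₀ 1 ^ (2m)` in norm, so the fewer than `3m` pieces together are `O(δ)`.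
-/

open Finset

section Expansion

variable {K : Type*} [Field K]

theorem one_div_sub_eq_sum_add (x₀ x l : K) (hl₀ : l - x₀ ≠ 0) (hl : l - x ≠ 0) :
    ∀ n : ℕ, 1 / (l - x) = ∑ s ∈ range n, (x - x₀) ^ s / (l - x₀) ^ (s + 1)
      + (x - x₀) ^ n / ((l - x₀) ^ n * (l - x))
  | 0 => by simp
  | n + 1 => by
    rw [one_div_sub_eq_sum_add x₀ x l hl₀ hl n, sum_range_succ]
    field_simp
    ring

theorem sum_div_sub_eq_sum_moments_add {ι : Type*} (t : Finset ι) (x₀ l : K) (x c : ι → K)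
    (hl₀ : l - x₀ ≠ 0) (hl : ∀ j ∈ t, l - x j ≠ 0) (n : ℕ) :
    ∑ j ∈ t, c j / (l - x j) =
      ∑ s ∈ range n, (∑ j ∈ t, (x j - x₀) ^ s * c j) / (l - x₀) ^ (s + 1)
        + ∑ j ∈ t, (x j - x₀) ^ n * c j / ((l - x₀) ^ n * (l - x j)) := by
  have hterm : ∀ j ∈ t, c j / (l - x j) =
      ∑ s ∈ range n, (x j - x₀) ^ s * c j / (l - x₀) ^ (s + 1)
        + (x j - x₀) ^ n * c j / ((l - x₀) ^ n * (l - x j)) := fun j hj => by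
    rw [← one_div_mul_eq_div, one_div_sub_eq_sum_add x₀ (x j) l hl₀ (hl j hj) n, add_mul,
      sum_mul]
    simp only [div_mul_eq_mul_div]
  rw [sum_congr rfl hterm, sum_add_distrib, sum_comm]
  simp only [sum_div]

theorem sum_range_div_pow_sub_sum_fin {m n : ℕ} (hmn : m ≤ n) (μ : ℕ → K) (M : Fin m → K)
    (w : K) :
    ∑ s ∈ range n, μ s / w ^ (s + 1) - ∑ s : Fin m, M s / w ^ ((s : ℕ) + 1) =
      ∑ s : Fin m, (μ s - M s) / w ^ ((s : ℕ) + 1) + ∑ s ∈ Ico m n, μ s / w ^ (s + 1) := by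
  rw [← sum_range_add_sum_Ico _ hmn, ← Fin.sum_univ_eq_sum_range (fun s => μ s / w ^ (s + 1))]
  simp only [sub_div, sum_sub_distrib]
  ring

end Expansion

theorem norm_sum_le_of_card_le {ι E : Type*} [SeminormedAddCommGroup E] {t : Finset ι}
    {f : ι → E} {k : ℕ} {B : ℝ} (hk : #t ≤ k) (hB : 0 ≤ B) (hf : ∀ i ∈ t, ‖f i‖ ≤ B) :
    ‖∑ i ∈ t, f i‖ ≤ k * B :=
  calc ‖∑ i ∈ t, f i‖ ≤ ∑ _i ∈ t, B := norm_sum_le_of_le t hf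
    _ = #t * B := by rw [sum_const, nsmul_eq_mul]
    _ ≤ k * B := by gcongr

theorem norm_div_le_div_pow {E : Type*} [NormedDivisionRing E] {x y : E} {δ c : ℝ} {s k : ℕ}
    (hc : 0 < c) (hc₁ : c ≤ 1) (hsk : s ≤ k) (hx : ‖x‖ ≤ δ) (hy : c ^ s ≤ ‖y‖) :
    ‖x / y‖ ≤ δ / c ^ k := by
  have hδ : 0 ≤ δ := (norm_nonneg x).trans hx
  rw [norm_div]
  calc ‖x‖ / ‖y‖ ≤ δ / c ^ s := div_le_div₀ hδ hx (by positivity) hy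
    _ ≤ δ / c ^ k := div_le_div_of_nonneg_left hδ (by positivity)
        (pow_le_pow_of_le_one hc.le hc₁ hsk)

theorem rpow_one_div_pow_mul_rpow_one_sub_div {δ : ℝ} (hδ : 0 < δ) {m : ℕ} (hm : 1 ≤ m) :
    (δ ^ ((1 : ℝ) / m)) ^ (2 * m - 1) * δ ^ ((1 - (m : ℝ)) / m) = δ := by
  have hmR : (m : ℝ) ≠ 0 := by positivity
  rw [← Real.rpow_natCast, ← Real.rpow_mul hδ.le, ← Real.rpow_add hδ, Nat.cast_sub (by omega)]
  convert Real.rpow_one δ using 2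
  push_cast
  field_simp
  ring

theorem perturbed_pole_estimate_general (m : ℕ) (hm : 1 ≤ m) (c₀ Λ : ℝ) (hc₀ : 0 < c₀) :
    ∃ C > 0, ∀ δ : ℝ, 0 < δ → δ ≤ 1 →
      ∀ (l₀ l : ℂ) (lt Mt M : Fin m → ℂ),
        (∀ s : Fin m,
          Norm.norm ((∑ j, (lt j - l₀) ^ (s : ℕ) * Mt j) - M s) ≤ δ) →
        (∀ s : ℕ, m ≤ s → s ≤ 2 * (m - 1) →
          Norm.norm (∑ j, (lt j - l₀) ^ s * Mt j) ≤ δ) →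
        (∀ j, Norm.norm (lt j - l₀) ≤ δ ^ ((1 : ℝ) / m)) →
        (∀ j, Norm.norm (Mt j) ≤ δ ^ ((1 - (m : ℝ)) / m)) →
        c₀ ≤ Norm.norm (l - l₀) → (∀ j, c₀ ≤ Norm.norm (l - lt j)) →
        Norm.norm (l - l₀) ≤ Λ →
        Norm.norm ((∑ j, Mt j / (l - lt j)) -
            ∑ s : Fin m, M s / (l - l₀) ^ ((s : ℕ) + 1)) ≤ C * δ := by
  set c := min c₀ 1
  have hc : 0 < c := lt_min hc₀ one_pos
  refine ⟨3 * m / c ^ (2 * m), by positivity, ?_⟩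
  intro δ hδ _ l₀ l lt Mt M hlow hhigh hlt hMt hl₀ hl _
  have hpow : ∀ s, c ^ s ≤ ‖(l - l₀) ^ s‖ := fun s => by
    rw [norm_pow]; gcongr; exact (min_le_left _ _).trans hl₀
  have hne : ∀ z : ℂ, c₀ ≤ ‖z‖ → z ≠ 0 := fun z hz => norm_pos_iff.mp (hc₀.trans_le hz)
  have hB : 0 ≤ δ / c ^ (2 * m) := by positivity
  rw [sum_div_sub_eq_sum_moments_add univ l₀ l lt Mt (hne _ hl₀) (fun j _ => hne _ (hl j))
    (2 * m - 1), add_sub_right_comm, sum_range_div_pow_sub_sum_fin (by omega)]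
  calc _ ≤ m * (δ / c ^ (2 * m)) + m * (δ / c ^ (2 * m)) + m * (δ / c ^ (2 * m)) := by
        refine norm_add₃_le.trans (add_le_add_three ?_ ?_ ?_)
        · refine norm_sum_le_of_card_le (by simp) hB fun s _ => ?_
          exact norm_div_le_div_pow hc (min_le_right _ _) (by omega) (hlow s) (hpow _)
        · refine norm_sum_le_of_card_le (by simp; omega) hB fun s hs => ?_
          rw [mem_Ico] at hs
          exact norm_div_le_div_pow hc (min_le_right _ _) (by omega)
            (hhigh s hs.1 (by omega)) (hpow _)
        · refine norm_sum_le_of_card_le (by simp) hB fun j _ => ?_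
          refine norm_div_le_div_pow hc (min_le_right _ _) (le_refl (2 * m)) ?_ ?_
          · rw [norm_mul, norm_pow, ← rpow_one_div_pow_mul_rpow_one_sub_div hδ hm]
            gcongr
            exacts [hlt j, hMt j]
          · rw [norm_mul, show 2 * m = (2 * m - 1) + 1 by omega, pow_succ]
            gcongr
            · exact hpow _
            · exact (min_le_left _ _).trans (hl j)
    _ = 3 * m / c ^ (2 * m) * δ := by ring

/-- Estimate for the difference between a perturbed sum of simple poles and the
original higher-order pole expansion. -/
theorem perturbed_pole_estimate (m : ℕ) (hm : 1 ≤ m) (c₀ Λ : ℝ) (hc₀ : 0 < c₀)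
    (hΛ : 0 < Λ) :
    ∃ C > 0, ∀ δ : ℝ, 0 < δ → δ ≤ 1 →
      ∀ (l₀ l : ℂ) (lt Mt M : Fin m → ℂ),
        (∀ s : Fin m,
          Norm.norm ((∑ j, (lt j - l₀) ^ (s : ℕ) * Mt j) - M s) ≤ δ) →
        (∀ s : ℕ, m ≤ s → s ≤ 2 * (m - 1) →
          Norm.norm (∑ j, (lt j - l₀) ^ s * Mt j) ≤ δ) →
        (∀ j, Norm.norm (lt j - l₀) ≤ δ ^ ((1 : ℝ) / m)) →
        (∀ j, Norm.norm (Mt j) ≤ δ ^ ((1 - (m : ℝ)) / m)) →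
        c₀ ≤ Norm.norm (l - l₀) → (∀ j, c₀ ≤ Norm.norm (l - lt j)) →
        Norm.norm (l - l₀) ≤ Λ →
        Norm.norm ((∑ j, Mt j / (l - lt j)) -
            ∑ s : Fin m, M s / (l - l₀) ^ ((s : ℕ) + 1)) ≤ C * δ :=
  perturbed_pole_estimate_general m hm c₀ Λ hc₀
end

section
/- Let φ(x, λ) solve -y'' + q y = λ y with φ(0,λ)=1, φ'(0,λ)=h, where q is continuous on [0,π] and h ∈ ℂ. For fixed x ∈ [0,π], the map λ ↦ φ(x, λ) is entire, and for λ_n = ρ_n² and λ̃_n = ρ̃_n² with ρ_n, ρ̃_n in a fixed horizontal strip {|Im ρ| ≤ A} and Re ρ ≥ 0, one has |φ(x, λ_n) - φ(x, λ̃_n)| ≤ C |ρ_n - ρ̃_n|, with C depending only on q, h, A. -/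
/-!
Write `λ = ρ²`. By variation of constants, a solution of `f'' = (p - ρ²) f + G` is
`f x = cos (ρ x) f 0 + sinDiv ρ x f' 0 + ∫₀ˣ sinDiv ρ (x - t) (p f + G) t dt` with
`sinDiv ρ s = sin (ρ s) / ρ`. On the strip `|Im ρ| ≤ A` the kernels `cos (ρ s)`, `sinDiv ρ s` and
`ρ sinDiv ρ s` are bounded in terms of `A` alone, so Grönwall's inequality bounds `f` uniformly on
the strip.

For the Lipschitz bound apply this to `φ (ρ²) - φ (ρ̃²)`, whose forcing is
`(ρ̃² - ρ²) φ (ρ̃²)`: when `‖ρ̃‖ ≤ ‖ρ‖` the factor `ρ̃ + ρ` is absorbed by the kernel `ρ sinDiv ρ`, leaving `‖ρ - ρ̃‖`.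
For entireness take `ρ = 0`: the estimate makes `φ` locally Lipschitz in `λ`, and the difference
quotients `(φ μ - φ λ) / (μ - λ)`, which solve the equation at `λ` with forcing `-φ μ`, then form
a Cauchy family as `μ → λ`.
-/

open Complex Set intervalIntegral Filter Metric Topology
open scoped Real

lemma Complex.norm_exp_mul_I_le (z : ℂ) : ‖exp (z * I)‖ ≤ Real.exp |z.im| := by
  rw [norm_exp]; simpa using neg_le_abs z.im

lemma Complex.norm_cos_le_exp_abs_im (z : ℂ) : ‖cos z‖ ≤ Real.exp |z.im| := by
  have h₁ := norm_exp_mul_I_le z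
  have h₂ : ‖exp (-z * I)‖ ≤ Real.exp |z.im| := by simpa using norm_exp_mul_I_le (-z)
  calc ‖cos z‖ = ‖exp (z * I) + exp (-z * I)‖ / 2 := by rw [cos, norm_div, Complex.norm_two]
    _ ≤ (‖exp (z * I)‖ + ‖exp (-z * I)‖) / 2 := by gcongr; exact norm_add_le _ _
    _ ≤ Real.exp |z.im| := by linarith

lemma Complex.norm_sin_le_exp_abs_im (z : ℂ) : ‖sin z‖ ≤ Real.exp |z.im| := by
  have h₁ := norm_exp_mul_I_le z
  have h₂ : ‖exp (-z * I)‖ ≤ Real.exp |z.im| := by simpa using norm_exp_mul_I_le (-z)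
  calc ‖sin z‖ = ‖exp (-z * I) - exp (z * I)‖ / 2 := by
        rw [sin, norm_div, norm_mul, Complex.norm_two, norm_I, mul_one]
    _ ≤ (‖exp (-z * I)‖ + ‖exp (z * I)‖) / 2 := by gcongr; exact norm_sub_le _ _
    _ ≤ Real.exp |z.im| := by linarith

lemma abs_im_mul_ofReal_le {ρ : ℂ} {A b s : ℝ} (hρ : |ρ.im| ≤ A) (hs : 0 ≤ s) (hsb : s ≤ b) :
    |(ρ * s).im| ≤ A * b := by
  rw [mul_im, ofReal_re, ofReal_im, mul_zero, zero_add, abs_mul, abs_of_nonneg hs]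
  exact mul_le_mul hρ hsb hs ((abs_nonneg _).trans hρ)

/-- `sin (ρ s) / ρ`, written as an integral so that it needs no case split at `ρ = 0`. -/
noncomputable def sinDiv (ρ : ℂ) (s : ℝ) : ℂ := ∫ u in (0 : ℝ)..s, cos (ρ * u)

lemma hasDerivAt_sinDiv (ρ : ℂ) (s : ℝ) : HasDerivAt (sinDiv ρ) (cos (ρ * s)) s :=
  ((by fun_prop : Continuous fun u : ℝ => cos (ρ * u)).integral_hasStrictDerivAt 0 s).hasDerivAt

lemma continuous_sinDiv (ρ : ℂ) : Continuous (sinDiv ρ) :=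
  continuous_iff_continuousAt.2 fun s => (hasDerivAt_sinDiv ρ s).continuousAt

@[simp]
lemma sinDiv_zero_right (ρ : ℂ) : sinDiv ρ 0 = 0 := integral_same

@[simp]
lemma sinDiv_zero_left (s : ℝ) : sinDiv 0 s = s := by simp [sinDiv]

lemma mul_sinDiv (ρ : ℂ) (s : ℝ) : ρ * sinDiv ρ s = sin (ρ * s) := by
  have hsin : ∀ u : ℝ, HasDerivAt (fun u : ℝ => sin (ρ * u)) (ρ * cos (ρ * u)) u := fun u => by
    simpa [mul_comm] using (((hasDerivAt_id (u : ℂ)).const_mul ρ).csin).comp_ofReal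
  rw [sinDiv, ← integral_const_mul, integral_eq_sub_of_hasDerivAt (fun u _ => hsin u)
    ((by fun_prop : Continuous fun u : ℝ => ρ * cos (ρ * u)).intervalIntegrable _ _)]
  simp

lemma norm_sinDiv_le {ρ : ℂ} {A b s : ℝ} (hρ : |ρ.im| ≤ A) (hs : 0 ≤ s) (hsb : s ≤ b) :
    ‖sinDiv ρ s‖ ≤ b * Real.exp (A * b) := by
  have hcos : ∀ u ∈ uIoc 0 s, ‖cos (ρ * u)‖ ≤ Real.exp (A * b) := fun u hu => by
    rw [uIoc_of_le hs] at hu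
    exact (norm_cos_le_exp_abs_im _).trans
      (Real.exp_le_exp.2 (abs_im_mul_ofReal_le hρ hu.1.le (hu.2.trans hsb)))
  calc ‖sinDiv ρ s‖ ≤ Real.exp (A * b) * |s - 0| := norm_integral_le_of_norm_le_const hcos
    _ ≤ b * Real.exp (A * b) := by
      rw [sub_zero, abs_of_nonneg hs, mul_comm]; gcongr

lemma norm_mul_sinDiv_le {ρ : ℂ} {A b s : ℝ} (hρ : |ρ.im| ≤ A) (hs : 0 ≤ s) (hsb : s ≤ b) :
    ‖ρ * sinDiv ρ s‖ ≤ Real.exp (A * b) := by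
  rw [mul_sinDiv]
  exact (norm_sin_le_exp_abs_im _).trans (Real.exp_le_exp.2 (abs_im_mul_ofReal_le hρ hs hsb))

lemma norm_cos_mul_le {ρ : ℂ} {A b s : ℝ} (hρ : |ρ.im| ≤ A) (hs : 0 ≤ s) (hsb : s ≤ b) :
    ‖cos (ρ * s)‖ ≤ Real.exp (A * b) :=
  (norm_cos_le_exp_abs_im _).trans (Real.exp_le_exp.2 (abs_im_mul_ofReal_le hρ hs hsb))

theorem eq_cos_mul_add_sinDiv_mul_add_integral {ρ : ℂ} {f f' F : ℝ → ℂ} {x : ℝ} (hx : 0 ≤ x)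
    (hF : ContinuousOn F (Icc 0 x)) (hf : ∀ t ∈ Icc 0 x, HasDerivAt f (f' t) t)
    (hf' : ∀ t ∈ Icc 0 x, HasDerivAt f' (F t - ρ ^ 2 * f t) t) :
    f x = cos (ρ * x) * f 0 + sinDiv ρ x * f' 0 + ∫ t in (0 : ℝ)..x, sinDiv ρ (x - t) * F t := by
  set g : ℝ → ℂ := fun t => sinDiv ρ (x - t) * f' t + cos (ρ * ↑(x - t)) * f t
  have hg : ∀ t ∈ uIcc 0 x, HasDerivAt g (sinDiv ρ (x - t) * F t) t := by
    intro t ht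
    rw [uIcc_of_le hx] at ht
    have hsub : HasDerivAt (fun t : ℝ => x - t) (-1) t := by
      simpa using (hasDerivAt_id t).const_sub x
    have hK : HasDerivAt (fun t => sinDiv ρ (x - t)) (-cos (ρ * ↑(x - t))) t := by
      simpa [Function.comp_def] using (hasDerivAt_sinDiv ρ (x - t)).scomp t hsub
    have hC : HasDerivAt (fun t : ℝ => cos (ρ * ↑(x - t))) (ρ * sin (ρ * ↑(x - t))) t := by
      have := (((hasDerivAt_id ((x - t : ℝ) : ℂ)).const_mul ρ).ccos).comp_ofReal.scomp t hsub
      simpa [Function.comp_def, mul_comm] using this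
    refine ((hK.mul (hf' t ht)).add (hC.mul (hf t ht))).congr_deriv ?_
    rw [← mul_sinDiv]; ring
  have hint : IntervalIntegrable (fun t => sinDiv ρ (x - t) * F t) MeasureTheory.volume 0 x := by
    refine ContinuousOn.intervalIntegrable ?_
    rw [uIcc_of_le hx]
    exact ((continuous_sinDiv ρ).comp (continuous_sub_left x)).continuousOn.mul hF
  have hFTC := integral_eq_sub_of_hasDerivAt hg hint
  simp only [g, sub_self, sinDiv_zero_right, ofReal_zero, mul_zero, cos_zero, zero_mul, zero_add,
    one_mul, sub_zero] at hFTC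
  rw [hFTC]; ring

theorem le_mul_exp_of_le_add_mul_integral {u : ℝ → ℝ} {b M K : ℝ} (hu : Continuous u)
    (hK : 0 ≤ K) (h : ∀ x ∈ Icc 0 b, u x ≤ M + K * ∫ t in (0 : ℝ)..x, u t) :
    ∀ x ∈ Icc 0 b, u x ≤ M * Real.exp (K * x) := by
  set U : ℝ → ℝ := fun x => ∫ t in (0 : ℝ)..x, u t
  have hU : ∀ x ∈ Ico 0 b, HasDerivWithinAt U (u x) (Ici x) x := fun x _ =>
    (hu.integral_hasStrictDerivAt 0 x).hasDerivAt.hasDerivWithinAt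
  have hUc : ContinuousOn U (Icc 0 b) :=
    (continuous_primitive (fun _ _ => hu.intervalIntegrable _ _) 0).continuousOn
  have hgron := le_gronwallBound_of_liminf_deriv_right_le (δ := 0) hUc
    (fun x hx _ hr => (hU x hx).liminf_right_slope_le hr) (by simp [U])
    (fun x hx => (h x (Ico_subset_Icc_self hx)).trans_eq (add_comm _ _))
  have hK_mul : ∀ x, K * gronwallBound 0 K M x = M * (Real.exp (K * x) - 1) := fun x => by
    rcases eq_or_ne K 0 with rfl | hK0
    · simp
    · rw [gronwallBound_of_K_ne_0 hK0]; field_simp; ring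
  intro x hx
  calc u x ≤ M + K * U x := h x hx
    _ ≤ M + K * gronwallBound 0 K M (x - 0) := by gcongr; exact hgron x hx
    _ = M * Real.exp (K * x) := by rw [sub_zero, hK_mul]; ring

theorem norm_le_of_hasDerivAt_sub_sq_mul {ρ : ℂ} {A P M b : ℝ} (hb : 0 ≤ b) (hρ : |ρ.im| ≤ A)
    {p G f f' : ℝ → ℂ} (hp : ContinuousOn p (Icc 0 b)) (hpP : ∀ t ∈ Icc 0 b, ‖p t‖ ≤ P)
    (hG : ContinuousOn G (Icc 0 b))
    (hGM : ∀ x ∈ Icc 0 b, ∀ t ∈ Icc 0 x, ‖sinDiv ρ (x - t) * G t‖ ≤ M)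
    (hf : ∀ t, HasDerivAt f (f' t) t)
    (hf' : ∀ t ∈ Icc 0 b, HasDerivAt f' ((p t - ρ ^ 2) * f t + G t) t) :
    ∀ x ∈ Icc 0 b, ‖f x‖ ≤
      (Real.exp (A * b) * (‖f 0‖ + b * ‖f' 0‖) + b * M) *
        Real.exp (b * Real.exp (A * b) * P * b) := by
  have hb0 : (0 : ℝ) ∈ Icc 0 b := ⟨le_rfl, hb⟩
  have hP : 0 ≤ P := (norm_nonneg _).trans (hpP 0 hb0)
  have hM : 0 ≤ M := (norm_nonneg _).trans (hGM 0 hb0 0 ⟨le_rfl, le_rfl⟩)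
  have hfc : Continuous f := continuous_iff_continuousAt.2 fun t => (hf t).continuousAt
  set E := Real.exp (A * b)
  have hkernel : ∀ x ∈ Icc 0 b, ∀ t ∈ Icc 0 x,
      ‖sinDiv ρ (x - t) * (p t * f t + G t)‖ ≤ b * E * P * ‖f t‖ + M := by
    intro x hx t ht
    have hK := norm_sinDiv_le hρ (sub_nonneg.2 ht.2) ((sub_le_self x ht.1).trans hx.2)
    calc _ ≤ ‖sinDiv ρ (x - t)‖ * ‖p t‖ * ‖f t‖ + ‖sinDiv ρ (x - t) * G t‖ := by
          rw [mul_add, ← mul_assoc, ← norm_mul, ← norm_mul]; exact norm_add_le _ _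
      _ ≤ b * E * P * ‖f t‖ + M := by
          gcongr
          exacts [hpP t ⟨ht.1, ht.2.trans hx.2⟩, hGM x hx t ht]
  have hbound : ∀ x ∈ Icc 0 b, ‖f x‖ ≤ E * (‖f 0‖ + b * ‖f' 0‖) + b * M
      + b * E * P * ∫ t in (0 : ℝ)..x, ‖f t‖ := by
    intro x hx
    have hsub : Icc 0 x ⊆ Icc 0 b := Icc_subset_Icc le_rfl hx.2
    rw [eq_cos_mul_add_sinDiv_mul_add_integral hx.1 (F := fun t => p t * f t + G t)
      (((hp.mono hsub).mul hfc.continuousOn).add (hG.mono hsub)) (fun t _ => hf t)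
      (fun t ht => (hf' t (hsub ht)).congr_deriv (by ring))]
    have hint : ‖∫ t in (0 : ℝ)..x, sinDiv ρ (x - t) * (p t * f t + G t)‖ ≤
        b * E * P * (∫ t in (0 : ℝ)..x, ‖f t‖) + x * M := by
      have hfi : IntervalIntegrable (fun t => ‖f t‖) MeasureTheory.volume 0 x :=
        hfc.norm.intervalIntegrable _ _
      refine (norm_integral_le_of_norm_le hx.1
        (Eventually.of_forall fun t ht => hkernel x hx t (Ioc_subset_Icc_self ht))
        ((hfi.const_mul _).add intervalIntegrable_const)).trans_eq ?_
      rw [integral_add (hfi.const_mul _) intervalIntegrable_const, integral_const_mul,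
        integral_const, sub_zero, smul_eq_mul]
    calc _ ≤ ‖cos (ρ * x)‖ * ‖f 0‖ + ‖sinDiv ρ x‖ * ‖f' 0‖
          + ‖∫ t in (0 : ℝ)..x, sinDiv ρ (x - t) * (p t * f t + G t)‖ := by
          rw [← norm_mul, ← norm_mul]; exact norm_add₃_le
      _ ≤ E * ‖f 0‖ + b * E * ‖f' 0‖ + (b * E * P * (∫ t in (0 : ℝ)..x, ‖f t‖) + b * M) := by
          gcongr
          · exact norm_cos_mul_le hρ hx.1 hx.2
          · exact norm_sinDiv_le hρ hx.1 hx.2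
          · exact hint.trans (by gcongr; exact hx.2)
      _ = _ := by ring
  intro x hx
  calc ‖f x‖ ≤ (E * (‖f 0‖ + b * ‖f' 0‖) + b * M) * Real.exp (b * E * P * x) :=
        le_mul_exp_of_le_add_mul_integral hfc.norm (by positivity) hbound x hx
    _ ≤ _ := by gcongr; exact hx.2

theorem norm_le_of_hasDerivAt_mul_add_of_eq_zero {P M b : ℝ} (hb : 0 ≤ b) {p G f f' : ℝ → ℂ}
    (hp : ContinuousOn p (Icc 0 b)) (hpP : ∀ t ∈ Icc 0 b, ‖p t‖ ≤ P)
    (hG : ContinuousOn G (Icc 0 b)) (hGM : ∀ t ∈ Icc 0 b, ‖G t‖ ≤ M)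
    (hf : ∀ t, HasDerivAt f (f' t) t) (hf' : ∀ t ∈ Icc 0 b, HasDerivAt f' (p t * f t + G t) t)
    (hf0 : f 0 = 0) (hf'0 : f' 0 = 0) :
    ∀ x ∈ Icc 0 b, ‖f x‖ ≤ b * b * M * Real.exp (b * P * b) := by
  intro x hx
  have hsinDiv : ∀ y ∈ Icc 0 b, ∀ t ∈ Icc 0 y, ‖sinDiv 0 (y - t) * G t‖ ≤ b * M := by
    intro y hy t ht
    rw [sinDiv_zero_left, norm_mul, norm_real, Real.norm_eq_abs, abs_of_nonneg (sub_nonneg.2 ht.2)]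
    exact mul_le_mul (by linarith [hy.2, ht.1]) (hGM t ⟨ht.1, ht.2.trans hy.2⟩) (norm_nonneg _) hb
  refine (norm_le_of_hasDerivAt_sub_sq_mul (ρ := 0) (A := 0) hb (by simp) hp hpP hG hsinDiv hf
    (fun t ht => (hf' t ht).congr_deriv (by ring)) x hx).trans_eq ?_
  simp [hf0, hf'0]; ring

theorem differentiableAt_of_norm_slope_sub_le {𝕜 E : Type*} [NontriviallyNormedField 𝕜]
    [NormedAddCommGroup E] [NormedSpace 𝕜 E] [CompleteSpace E] {f : 𝕜 → E} {a : 𝕜} {r K : ℝ}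
    (hr : 0 < r) (h : ∀ μ ∈ ball a r \ {a}, ∀ ν ∈ ball a r \ {a},
      ‖slope f a μ - slope f a ν‖ ≤ K * (‖μ - a‖ + ‖ν - a‖)) :
    DifferentiableAt 𝕜 f a := by
  suffices hcauchy : Cauchy (map (slope f a) (𝓝[≠] a)) by
    obtain ⟨f', hf'⟩ := cauchy_map_iff_exists_tendsto.1 hcauchy
    exact (hasDerivAt_iff_tendsto_slope.2 hf').differentiableAt
  refine Metric.cauchy_iff.2 ⟨inferInstance, fun ε hε => ?_⟩
  set δ : ℝ := min r (ε / (2 * (|K| + 1)))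
  have hδ : 0 < δ := lt_min hr (by positivity)
  have hKδ : |K| * (2 * δ) < ε := by
    have hδε : δ ≤ ε / (2 * (|K| + 1)) := min_le_right _ _
    calc |K| * (2 * δ) ≤ |K| * (2 * (ε / (2 * (|K| + 1)))) := by gcongr
      _ < (|K| + 1) * (2 * (ε / (2 * (|K| + 1)))) := by gcongr; linarith
      _ = ε := by field_simp
  refine ⟨slope f a '' (ball a δ \ {a}),
    image_mem_map (sdiff_mem_nhdsWithin_compl (ball_mem_nhds a hδ) _), ?_⟩
  have hball : ball a δ \ {a} ⊆ ball a r \ {a} :=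
    sdiff_subset_sdiff_left (ball_subset_ball (min_le_left _ _))
  rintro _ ⟨μ, hμ, rfl⟩ _ ⟨ν, hν, rfl⟩
  have hμδ : ‖μ - a‖ < δ := mem_ball_iff_norm.1 hμ.1
  have hνδ : ‖ν - a‖ < δ := mem_ball_iff_norm.1 hν.1
  calc dist (slope f a μ) (slope f a ν) ≤ K * (‖μ - a‖ + ‖ν - a‖) := by
        rw [dist_eq_norm]; exact h μ (hball hμ) ν (hball hν)
    _ ≤ |K| * (2 * δ) := by
        refine (le_abs_self _).trans ?_
        rw [abs_mul, abs_of_nonneg (by positivity : (0 : ℝ) ≤ ‖μ - a‖ + ‖ν - a‖)]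
        gcongr; linarith
    _ < ε := hKδ

structure SolvesIVP (q : ℝ → ℂ) (h : ℂ) (φ φ' : ℂ → ℝ → ℂ) : Prop where
  init : ∀ l : ℂ, φ l 0 = 1 ∧ φ' l 0 = h
  hasDerivAt : ∀ l : ℂ, ∀ x : ℝ, HasDerivAt (φ l) (φ' l x) x
  hasDerivAt_deriv : ∀ l : ℂ, ∀ x : ℝ, HasDerivAt (φ' l) ((q x - l) * φ l x) x

namespace SolvesIVP

variable {q : ℝ → ℂ} {h : ℂ} {φ φ' : ℂ → ℝ → ℂ} {Q : ℝ}

theorem continuous (hφ : SolvesIVP q h φ φ') (l : ℂ) : Continuous (φ l) :=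
  continuous_iff_continuousAt.2 fun x => (hφ.hasDerivAt l x).continuousAt

theorem exists_norm_sq_le (hφ : SolvesIVP q h φ φ') (hq : ContinuousOn q (Icc 0 π))
    (hQ : ∀ t ∈ Icc 0 π, ‖q t‖ ≤ Q) (A : ℝ) :
    ∃ C, ∀ ρ : ℂ, |ρ.im| ≤ A → ∀ x ∈ Icc 0 π, ‖φ (ρ ^ 2) x‖ ≤ C := by
  refine ⟨Real.exp (A * π) * (1 + π * ‖h‖) * Real.exp (π * Real.exp (A * π) * Q * π),
    fun ρ hρ x hx => ?_⟩
  have hbound := norm_le_of_hasDerivAt_sub_sq_mul (M := 0) Real.pi_pos.le hρ hq hQ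
    continuousOn_const (fun _ _ _ _ => by simp) (hφ.hasDerivAt _)
    (fun t _ => (hφ.hasDerivAt_deriv (ρ ^ 2) t).congr_deriv (add_zero _).symm) x hx
  rwa [(hφ.init _).1, (hφ.init _).2, norm_one, mul_zero, add_zero] at hbound

theorem exists_norm_le (hφ : SolvesIVP q h φ φ') (hq : ContinuousOn q (Icc 0 π))
    (hQ : ∀ t ∈ Icc 0 π, ‖q t‖ ≤ Q) (R : ℝ) :
    ∃ C, ∀ l : ℂ, ‖l‖ ≤ R → ∀ x ∈ Icc 0 π, ‖φ l x‖ ≤ C := by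
  obtain ⟨C, hC⟩ := hφ.exists_norm_sq_le hq hQ (R + 1)
  refine ⟨C, fun l hl x hx => ?_⟩
  obtain ⟨ρ, rfl⟩ := IsAlgClosed.exists_pow_nat_eq l two_pos
  refine hC ρ ((abs_im_le_norm ρ).trans ?_) x hx
  rw [norm_pow] at hl
  nlinarith [sq_nonneg (‖ρ‖ - 1)]

theorem exists_norm_sub_le (hφ : SolvesIVP q h φ φ') (hq : ContinuousOn q (Icc 0 π))
    (hQ : ∀ t ∈ Icc 0 π, ‖q t‖ ≤ Q) (l : ℂ) :
    ∃ L, ∀ μ ∈ ball l 1, ∀ x ∈ Icc 0 π, ‖φ μ x - φ l x‖ ≤ L * ‖μ - l‖ := by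
  obtain ⟨C, hC⟩ := hφ.exists_norm_le hq hQ (‖l‖ + 1)
  refine ⟨π * π * C * Real.exp (π * (Q + ‖l‖) * π), fun μ hμ x hx => ?_⟩
  have hμl : ‖μ‖ ≤ ‖l‖ + 1 := by
    have := mem_ball_iff_norm.1 hμ
    linarith [norm_le_norm_add_norm_sub' μ l]
  refine (norm_le_of_hasDerivAt_mul_add_of_eq_zero (M := ‖μ - l‖ * C) (p := fun t => q t - l)
    (G := fun t => (l - μ) * φ μ t) (f := fun t => φ μ t - φ l t)
    (f' := fun t => φ' μ t - φ' l t) Real.pi_pos.le (hq.sub continuousOn_const)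
    (fun t ht => (norm_sub_le _ _).trans (add_le_add (hQ t ht) le_rfl))
    (continuousOn_const.mul (hφ.continuous μ).continuousOn)
    (fun t ht => by rw [norm_mul, norm_sub_rev]; gcongr; exact hC μ hμl t ht)
    (fun t => (hφ.hasDerivAt μ t).sub (hφ.hasDerivAt l t))
    (fun t _ => ((hφ.hasDerivAt_deriv μ t).sub (hφ.hasDerivAt_deriv l t)).congr_deriv (by ring))
    (by simp [(hφ.init _).1]) (by simp [(hφ.init _).2]) x hx).trans_eq (by ring)

theorem hasDerivAt_slope (hφ : SolvesIVP q h φ φ') (l μ : ℂ) (t : ℝ) :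
    HasDerivAt (fun t => slope (φ · t) l μ) (slope (φ' · t) l μ) t := by
  simp only [slope_def_module]
  exact ((hφ.hasDerivAt μ t).sub (hφ.hasDerivAt l t)).const_smul (μ - l)⁻¹

theorem hasDerivAt_slope_deriv (hφ : SolvesIVP q h φ φ') {l μ : ℂ} (hμ : μ ≠ l) (t : ℝ) :
    HasDerivAt (fun t => slope (φ' · t) l μ)
      ((q t - l) * slope (φ · t) l μ - φ μ t) t := by
  simp only [slope_def_module, smul_eq_mul]
  refine (((hφ.hasDerivAt_deriv μ t).sub (hφ.hasDerivAt_deriv l t)).const_mul _).congr_deriv ?_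
  field_simp [sub_ne_zero.2 hμ]
  ring

theorem exists_norm_slope_sub_le (hφ : SolvesIVP q h φ φ') (hq : ContinuousOn q (Icc 0 π))
    (hQ : ∀ t ∈ Icc 0 π, ‖q t‖ ≤ Q) (l : ℂ) :
    ∃ K, ∀ μ ∈ ball l 1 \ {l}, ∀ ν ∈ ball l 1 \ {l}, ∀ x ∈ Icc 0 π,
      ‖slope (φ · x) l μ - slope (φ · x) l ν‖ ≤ K * (‖μ - l‖ + ‖ν - l‖) := by
  obtain ⟨L, hL⟩ := hφ.exists_norm_sub_le hq hQ l
  refine ⟨π * π * L * Real.exp (π * (Q + ‖l‖) * π), fun μ hμ ν hν x hx => ?_⟩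
  have hG : ∀ t ∈ Icc 0 π, ‖φ ν t - φ μ t‖ ≤ L * (‖μ - l‖ + ‖ν - l‖) := fun t ht =>
    calc ‖φ ν t - φ μ t‖ ≤ ‖φ ν t - φ l t‖ + ‖φ μ t - φ l t‖ := by
          rw [norm_sub_rev (φ μ t)]; exact norm_sub_le_norm_sub_add_norm_sub _ _ _
      _ ≤ L * ‖ν - l‖ + L * ‖μ - l‖ := add_le_add (hL ν hν.1 t ht) (hL μ hμ.1 t ht)
      _ = L * (‖μ - l‖ + ‖ν - l‖) := by ring
  refine (norm_le_of_hasDerivAt_mul_add_of_eq_zero (p := fun t => q t - l)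
    (G := fun t => φ ν t - φ μ t) (f := fun t => slope (φ · t) l μ - slope (φ · t) l ν)
    (f' := fun t => slope (φ' · t) l μ - slope (φ' · t) l ν) Real.pi_pos.le
    (hq.sub continuousOn_const) (fun t ht => (norm_sub_le _ _).trans (add_le_add (hQ t ht) le_rfl))
    ((hφ.continuous ν).sub (hφ.continuous μ)).continuousOn hG
    (fun t => (hφ.hasDerivAt_slope l μ t).sub (hφ.hasDerivAt_slope l ν t))
    (fun t _ => ((hφ.hasDerivAt_slope_deriv hμ.2 t).sub
      (hφ.hasDerivAt_slope_deriv hν.2 t)).congr_deriv (by ring))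
    (by simp [slope_def_module, (hφ.init _).1]) (by simp [slope_def_module, (hφ.init _).2])
    x hx).trans_eq (by ring)

theorem differentiableAt (hφ : SolvesIVP q h φ φ') (hq : ContinuousOn q (Icc 0 π))
    (hQ : ∀ t ∈ Icc 0 π, ‖q t‖ ≤ Q) {x : ℝ} (hx : x ∈ Icc 0 π) (l : ℂ) :
    DifferentiableAt ℂ (φ · x) l := by
  obtain ⟨K, hK⟩ := hφ.exists_norm_slope_sub_le hq hQ l
  exact differentiableAt_of_norm_slope_sub_le one_pos fun μ hμ ν hν => hK μ hμ ν hν x hx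

theorem exists_norm_sq_sub_sq_le (hφ : SolvesIVP q h φ φ') (hq : ContinuousOn q (Icc 0 π))
    (hQ : ∀ t ∈ Icc 0 π, ‖q t‖ ≤ Q) (A : ℝ) :
    ∃ C, ∀ ρ ρt : ℂ, |ρ.im| ≤ A → |ρt.im| ≤ A → ∀ x ∈ Icc 0 π,
      ‖φ (ρ ^ 2) x - φ (ρt ^ 2) x‖ ≤ C * ‖ρ - ρt‖ := by
  obtain ⟨C₀, hC₀⟩ := hφ.exists_norm_sq_le hq hQ A
  refine ⟨π * (2 * Real.exp (A * π) * C₀) * Real.exp (π * Real.exp (A * π) * Q * π),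
    fun ρ ρt hρ hρt => ?_⟩
  wlog hle : ‖ρt‖ ≤ ‖ρ‖ generalizing ρ ρt
  · intro x hx
    rw [norm_sub_rev, norm_sub_rev ρ]
    exact this ρt ρ hρt hρ (le_of_not_ge hle) x hx
  intro x hx
  have hC₀0 : 0 ≤ C₀ := (norm_nonneg _).trans (hC₀ ρ hρ 0 ⟨le_rfl, Real.pi_pos.le⟩)
  have hG : ∀ y ∈ Icc 0 π, ∀ t ∈ Icc 0 y,
      ‖sinDiv ρ (y - t) * ((ρt ^ 2 - ρ ^ 2) * φ (ρt ^ 2) t)‖ ≤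
        2 * Real.exp (A * π) * C₀ * ‖ρ - ρt‖ := by
    intro y hy t ht
    calc _ = ‖ρt + ρ‖ * ‖sinDiv ρ (y - t)‖ * ‖ρ - ρt‖ * ‖φ (ρt ^ 2) t‖ := by
          rw [sq_sub_sq, norm_mul, norm_mul, norm_mul, norm_sub_rev ρt]; ring
      _ ≤ (2 * ‖ρ‖) * ‖sinDiv ρ (y - t)‖ * ‖ρ - ρt‖ * C₀ := by
          gcongr
          · exact (norm_add_le _ _).trans (by linarith)
          · exact hC₀ ρt hρt t ⟨ht.1, ht.2.trans hy.2⟩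
      _ = 2 * ‖ρ * sinDiv ρ (y - t)‖ * C₀ * ‖ρ - ρt‖ := by rw [norm_mul]; ring
      _ ≤ 2 * Real.exp (A * π) * C₀ * ‖ρ - ρt‖ := by
          gcongr
          exact norm_mul_sinDiv_le hρ (sub_nonneg.2 ht.2) ((sub_le_self y ht.1).trans hy.2)
  refine (norm_le_of_hasDerivAt_sub_sq_mul Real.pi_pos.le hρ hq hQ
    (continuousOn_const.mul (hφ.continuous _).continuousOn) hG
    (G := fun t => (ρt ^ 2 - ρ ^ 2) * φ (ρt ^ 2) t) (f := fun t => φ (ρ ^ 2) t - φ (ρt ^ 2) t)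
    (f' := fun t => φ' (ρ ^ 2) t - φ' (ρt ^ 2) t)
    (fun t => (hφ.hasDerivAt _ t).sub (hφ.hasDerivAt _ t))
    (fun t _ => ((hφ.hasDerivAt_deriv _ t).sub (hφ.hasDerivAt_deriv _ t)).congr_deriv (by ring))
    x hx).trans_eq ?_
  simp [(hφ.init _).1, (hφ.init _).2]
  ring

end SolvesIVP

/-- Entirety of `λ ↦ φ(x, λ)` and the Lipschitz bound `|φ(x, ρ²) - φ(x, ρ̃²)| ≤ C|ρ - ρ̃|`
for `ρ, ρ̃` in a fixed horizontal strip with nonnegative real part. -/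
theorem phi_entire_and_lipschitz (q : ℝ → ℂ) (h : ℂ)
    (hq : ContinuousOn q (Set.Icc 0 Real.pi))
    (φ φ' : ℂ → ℝ → ℂ)
    (hinit : ∀ l : ℂ, φ l 0 = 1 ∧ φ' l 0 = h)
    (hode1 : ∀ l : ℂ, ∀ x : ℝ, HasDerivAt (φ l) (φ' l x) x)
    (hode2 : ∀ l : ℂ, ∀ x : ℝ, HasDerivAt (φ' l) ((q x - l) * φ l x) x) :
    (∀ x ∈ Set.Icc 0 Real.pi, ∀ l : ℂ, DifferentiableAt ℂ (fun z : ℂ => φ z x) l) ∧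
    (∀ A : ℝ, 0 < A → ∃ C > 0, ∀ ρ ρt : ℂ,
      |ρ.im| ≤ A → |ρt.im| ≤ A → 0 ≤ ρ.re → 0 ≤ ρt.re →
      ∀ x ∈ Set.Icc 0 Real.pi,
        ‖φ (ρ ^ 2) x - φ (ρt ^ 2) x‖ ≤ C * ‖ρ - ρt‖) := by
  have hφ : SolvesIVP q h φ φ' := ⟨hinit, hode1, hode2⟩
  obtain ⟨Q, hQ⟩ := isCompact_Icc.exists_bound_of_continuousOn hq
  refine ⟨fun x hx l => hφ.differentiableAt hq hQ hx l, fun A _ => ?_⟩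
  obtain ⟨C, hC⟩ := hφ.exists_norm_sq_sub_sq_le hq hQ A
  refine ⟨max C 1, by positivity, fun ρ ρt hρ hρt _ _ x hx => (hC ρ ρt hρ hρt x hx).trans ?_⟩
  gcongr
  exact le_max_left _ _
end

section
/- Let D(x, λ, ξ) = ∫₀ˣ φ(t, λ) φ(t, ξ) dt where φ(x,λ) is the Sturm–Liouville solution with φ(0,λ)=1, φ'(0,λ)=h and continuous potential q on [0,π]. Then for λ on a fixed compact set K ⊂ ℂ and λ_n, λ̃_n with ρ_n = √λ_n, ρ̃_n = √λ̃_n satisfying |ρ_n - n| ≤ 1 and |ρ̃_n - n| ≤ 1 (n ≥ 1), there is a constant C with |D(x, λ, λ̃_n) - D(x, λ, λ_n)| ≤ C |ρ_n - ρ̃_n| for all x ∈ [0,π], λ ∈ K, n ≥ 1. -/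
/-!
Write `λ = ρ ^ 2`. The difference `u = φ(·, ρ' ^ 2) - φ(·, ρ ^ 2)` solves
`u'' = (q - ρ' ^ 2) u + (ρ ^ 2 - ρ' ^ 2) φ(·, ρ ^ 2)` with zero initial data. For `n = 1` the
spectral parameters are bounded, and Grönwall's inequality for `(u, u')` gives
`‖u‖ ≤ C ‖ρ ^ 2 - ρ' ^ 2‖ ≤ 4 C ‖ρ - ρ'‖`. For `n ≥ 2`, `ρ'` lies in the strip `|Im ρ'| ≤ 1` and
`‖ρ'‖ ≥ 1`; Grönwall's inequality for the characteristic variables `(u' ∓ i ρ' u) e^{± i ρ' t}`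
gives the sharper `‖ρ'‖ ‖u‖ ≤ C ‖ρ ^ 2 - ρ' ^ 2‖`, and `‖ρ + ρ'‖ ≤ 6 ‖ρ'‖` turns this into
`‖u‖ ≤ 6 C ‖ρ - ρ'‖`. Since `φ(·, λ)` is bounded uniformly for `λ ∈ K`, integrating
`φ(·, λ) u` over `[0, x]` gives the estimate.
-/

open Set Real
open Complex (I)
open scoped Complex

theorem gronwallBound_le_mul_exp {δ K ε : ℝ} (hK : 0 ≤ K) (hε : 0 ≤ ε) (x : ℝ) :
    gronwallBound δ K ε x ≤ (δ + ε * x) * exp (K * x) := by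
  rcases hK.eq_or_lt with rfl | hK
  · simp [gronwallBound_K0]
  rw [gronwallBound_of_K_ne_0 hK.ne']
  -- `1 - y ≤ e^{-y}` multiplied by `e^y`
  have key : exp (K * x) - 1 ≤ K * x * exp (K * x) := by
    have := mul_le_mul_of_nonneg_right (one_sub_le_exp_neg (K * x)) (exp_pos (K * x)).le
    rw [← exp_add, neg_add_cancel, exp_zero] at this
    linarith
  have : ε / K * (exp (K * x) - 1) ≤ ε * x * exp (K * x) := by
    rw [div_mul_eq_mul_div, div_le_iff₀ hK]
    nlinarith
  linarith

theorem norm_le_mul_exp_of_norm_deriv_le {E : Type*} [NormedAddCommGroup E] [NormedSpace ℝ E]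
    {f f' : ℝ → E} {δ K ε T t : ℝ} (hK : 0 ≤ K) (hε : 0 ≤ ε)
    (hf : ∀ s, HasDerivAt f (f' s) s) (h0 : ‖f 0‖ ≤ δ)
    (bound : ∀ s ∈ Ico 0 T, ‖f' s‖ ≤ K * ‖f s‖ + ε) (ht : t ∈ Icc 0 T) :
    ‖f t‖ ≤ (δ + ε * T) * exp (K * T) :=
  calc ‖f t‖ ≤ gronwallBound δ K ε (t - 0) :=
        norm_le_gronwallBound_of_norm_deriv_right_le
          (fun s _ => (hf s).continuousAt.continuousWithinAt) (fun s _ => (hf s).hasDerivWithinAt)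
          h0 bound t ht
    _ ≤ gronwallBound δ K ε T :=
        gronwallBound_mono ((norm_nonneg _).trans h0) hε hK (by linarith [ht.2])
    _ ≤ (δ + ε * T) * exp (K * T) := gronwallBound_le_mul_exp hK hε T

theorem norm_cexp_mul_ofReal_le {c : ℂ} (hc : |c.re| ≤ 1) {t T : ℝ} (ht : t ∈ Icc 0 T) :
    ‖cexp (c * t)‖ ≤ exp T := by
  rw [Complex.norm_exp, Complex.re_mul_ofReal]
  exact exp_le_exp.2 (by nlinarith [abs_le.1 hc, ht.1, ht.2])

theorem norm_mul_norm_le_exp_mul_norm {c x y : ℂ} (hc : |c.re| ≤ 1) {s T : ℝ}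
    (hs : s ∈ Icc 0 T) :
    ‖c‖ * ‖x‖ ≤ exp T * ‖((y - c * x) * cexp (c * s), (y - -c * x) * cexp (-c * s))‖ := by
  set w : ℂ × ℂ := ((y - c * x) * cexp (c * s), (y - -c * x) * cexp (-c * s))
  have hid : 2 * c * x = w.2 * cexp (c * s) - w.1 * cexp (-c * s) := by
    have : cexp (-c * s) * cexp (c * s) = 1 := by
      rw [← Complex.exp_add, neg_mul, neg_add_cancel, Complex.exp_zero]
    linear_combination (-(2 * c * x)) * this
  have : 2 * (‖c‖ * ‖x‖) ≤ 2 * (exp T * ‖w‖) := calc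
    2 * (‖c‖ * ‖x‖) = ‖2 * c * x‖ := by simp [mul_assoc]
    _ ≤ ‖w.2‖ * ‖cexp (c * s)‖ + ‖w.1‖ * ‖cexp (-c * s)‖ := by
        rw [hid, ← norm_mul, ← norm_mul]; exact norm_sub_le _ _
    _ ≤ ‖w‖ * exp T + ‖w‖ * exp T := by
        gcongr
        exacts [norm_snd_le _, norm_cexp_mul_ofReal_le hc hs, norm_fst_le _,
          norm_cexp_mul_ofReal_le (by simpa using hc) hs]
    _ = 2 * (exp T * ‖w‖) := by ring
  linarith

def SolvesSturmLiouville (q : ℝ → ℂ) (l : ℂ) (r u u' : ℝ → ℂ) : Prop :=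
  ∀ t, HasDerivAt u (u' t) t ∧ HasDerivAt u' ((q t - l) * u t + r t) t

namespace SolvesSturmLiouville

variable {q r u u' v v' : ℝ → ℂ} {h l a b ρ : ℂ} {Q R T B δ ε t : ℝ}

theorem sub (hu : SolvesSturmLiouville q a 0 u u') (hv : SolvesSturmLiouville q b 0 v v') :
    SolvesSturmLiouville q b (fun t => (a - b) * u t) (v - u) (v' - u') := fun t =>
  ⟨(hv t).1.sub (hu t).1,
    ((hv t).2.sub (hu t).2).congr_deriv (by simp only [Pi.zero_apply, Pi.sub_apply]; ring)⟩

theorem norm_le (hsol : SolvesSturmLiouville q l r u u') (hq : ∀ s ∈ Icc 0 T, ‖q s‖ ≤ Q)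
    (hl : ‖l‖ ≤ R) (hr : ∀ s ∈ Icc 0 T, ‖r s‖ ≤ ε) (h0 : ‖u 0‖ ≤ δ) (h0' : ‖u' 0‖ ≤ δ)
    (ht : t ∈ Icc 0 T) : ‖u t‖ ≤ (δ + ε * T) * exp ((1 + Q + R) * T) := by
  have hQ : 0 ≤ Q := (norm_nonneg _).trans (hq t ht)
  have hR : 0 ≤ R := (norm_nonneg _).trans hl
  have hε : 0 ≤ ε := (norm_nonneg _).trans (hr t ht)
  refine (norm_fst_le (u t, u' t)).trans <| norm_le_mul_exp_of_norm_deriv_le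
    (f := fun s => (u s, u' s)) (by positivity) hε (fun s => (hsol s).1.prodMk (hsol s).2)
    (max_le h0 h0') (fun s hs => ?_) ht
  have hs := Ico_subset_Icc_self hs
  have hu := norm_fst_le (u s, u' s)
  have hu' := norm_snd_le (u s, u' s)
  have hql : ‖q s - l‖ ≤ Q + R := (norm_sub_le _ _).trans (add_le_add (hq s hs) hl)
  have hrhs : ‖(q s - l) * u s + r s‖ ≤ (Q + R) * ‖u s‖ + ε :=
    (norm_add_le _ _).trans (add_le_add (by rw [norm_mul]; gcongr) (hr s hs))
  rw [Prod.norm_mk]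
  exact max_le (by nlinarith [norm_nonneg (u s, u' s)]) (by nlinarith [norm_nonneg (u s)])

theorem hasDerivAt_mul_cexp (hsol : SolvesSturmLiouville q l r u u') {c : ℂ} (hc : c ^ 2 = -l)
    (t : ℝ) : HasDerivAt (fun s => (u' s - c * u s) * cexp (c * s))
      ((q t * u t + r t) * cexp (c * t)) t := by
  have hexp : HasDerivAt (fun s : ℝ => cexp (c * s)) (cexp (c * t) * (c * 1)) t :=
    ((hasDerivAt_id t).ofReal_comp.const_mul c).cexp
  refine (((hsol t).2.sub ((hsol t).1.const_mul c)).mul hexp).congr_deriv ?_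
  simp only [Pi.sub_apply]
  linear_combination (-(u t * cexp (c * t))) * hc

theorem norm_mul_norm_le_of_abs_im_le (hsol : SolvesSturmLiouville q (ρ ^ 2) r u u')
    (hq : ∀ s ∈ Icc 0 T, ‖q s‖ ≤ Q) (hρ : |ρ.im| ≤ 1) (hρ1 : 1 ≤ ‖ρ‖)
    (hr : ∀ s ∈ Icc 0 T, ‖r s‖ ≤ ε) (h0 : ‖u' 0 - I * ρ * u 0‖ ≤ δ)
    (h0' : ‖u' 0 + I * ρ * u 0‖ ≤ δ) (ht : t ∈ Icc 0 T) :
    ‖ρ‖ * ‖u t‖ ≤ (δ + ε * T) * exp ((2 + Q * exp (2 * T)) * T) := by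
  have hQ : 0 ≤ Q := (norm_nonneg _).trans (hq t ht)
  have hε : 0 ≤ ε := (norm_nonneg _).trans (hr t ht)
  have hδ : 0 ≤ δ := (norm_nonneg _).trans h0
  have hT : 0 ≤ T := ht.1.trans ht.2
  set c := I * ρ
  have hc : c ^ 2 = -ρ ^ 2 := by simp only [c, mul_pow, Complex.I_sq]; ring
  have hc' : (-c) ^ 2 = -ρ ^ 2 := by rw [neg_sq, hc]
  have hcre : |c.re| ≤ 1 := by simpa [c] using hρ
  have hcρ : ‖c‖ = ‖ρ‖ := by simp [c]
  -- Grönwall for the characteristic variables `w`, from which `u` is recovered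
  set w : ℝ → ℂ × ℂ := fun s =>
    ((u' s - c * u s) * cexp (c * s), (u' s - -c * u s) * cexp (-c * s))
  have hw : ‖w t‖ ≤ (δ + exp T * ε * T) * exp (Q * exp (2 * T) * T) := by
    refine norm_le_mul_exp_of_norm_deriv_le (by positivity) (by positivity)
      (fun s => (hsol.hasDerivAt_mul_cexp hc s).prodMk (hsol.hasDerivAt_mul_cexp hc' s))
      ?_ (fun s hs => ?_) ht
    · simpa [w, Prod.norm_mk, ← sub_eq_add_neg] using max_le h0 h0'
    have hs := Ico_subset_Icc_self hs
    have hu : ‖u s‖ ≤ exp T * ‖w s‖ := (le_mul_of_one_le_left (norm_nonneg _) hρ1).trans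
      (hcρ ▸ norm_mul_norm_le_exp_mul_norm hcre hs)
    have hf : ‖q s * u s + r s‖ ≤ Q * (exp T * ‖w s‖) + ε :=
      (norm_add_le _ _).trans (add_le_add (by rw [norm_mul]; gcongr; exact hq s hs) (hr s hs))
    have h2T : exp (2 * T) = exp T * exp T := by rw [two_mul, exp_add]
    rw [Prod.norm_mk, h2T]
    refine max_le ?_ ?_ <;> rw [norm_mul]
    · nlinarith [mul_le_mul hf (norm_cexp_mul_ofReal_le hcre hs) (norm_nonneg _) (by positivity)]
    · nlinarith [mul_le_mul hf (norm_cexp_mul_ofReal_le (c := -c) (by simpa using hcre) hs)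
        (norm_nonneg _) (by positivity)]
  have hexp : exp ((2 + Q * exp (2 * T)) * T) = exp T * exp T * exp (Q * exp (2 * T) * T) := by
    rw [← exp_add, ← exp_add]; ring_nf
  calc ‖ρ‖ * ‖u t‖ ≤ exp T * ‖w t‖ := hcρ ▸ norm_mul_norm_le_exp_mul_norm hcre ht
    _ ≤ exp T * ((δ + exp T * ε * T) * exp (Q * exp (2 * T) * T)) := by gcongr
    _ ≤ (δ + ε * T) * exp ((2 + Q * exp (2 * T)) * T) := by
        rw [hexp]
        have hδT := le_mul_of_one_le_left hδ (one_le_exp hT)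
        nlinarith [mul_le_mul_of_nonneg_left hδT
          (by positivity : 0 ≤ exp T * exp (Q * exp (2 * T) * T))]

theorem norm_le_of_init (hsol : SolvesSturmLiouville q l 0 u u') (hu0 : u 0 = 1) (hu0' : u' 0 = h)
    (hq : ∀ s ∈ Icc 0 T, ‖q s‖ ≤ Q) (hl : ‖l‖ ≤ R) (ht : t ∈ Icc 0 T) :
    ‖u t‖ ≤ (1 + ‖h‖) * exp ((1 + Q + R) * T) := by
  simpa using hsol.norm_le hq hl (ε := 0) (fun _ _ => by simp)
    (by simp [hu0]) (by simp [hu0']) ht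

theorem norm_le_of_init_of_abs_im_le (hsol : SolvesSturmLiouville q (ρ ^ 2) 0 u u')
    (hu0 : u 0 = 1) (hu0' : u' 0 = h) (hq : ∀ s ∈ Icc 0 T, ‖q s‖ ≤ Q) (hρ : |ρ.im| ≤ 1)
    (hρ1 : 1 ≤ ‖ρ‖) (ht : t ∈ Icc 0 T) :
    ‖u t‖ ≤ (1 + ‖h‖) * exp ((2 + Q * exp (2 * T)) * T) := by
  have hδ : ‖h‖ + ‖I * ρ‖ ≤ (1 + ‖h‖) * ‖ρ‖ := by
    rw [norm_mul, Complex.norm_I, one_mul]; nlinarith [norm_nonneg h]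
  have := hsol.norm_mul_norm_le_of_abs_im_le hq hρ hρ1 (ε := 0) (δ := (1 + ‖h‖) * ‖ρ‖)
    (fun _ _ => by simp)
    (by rw [hu0, hu0', mul_one]; exact (norm_sub_le _ _).trans hδ)
    (by rw [hu0, hu0', mul_one]; exact (norm_add_le _ _).trans hδ) ht
  rw [zero_mul, add_zero, mul_comm _ ‖ρ‖, mul_assoc] at this
  exact le_of_mul_le_mul_left this (by linarith)

theorem norm_sub_le (hu : SolvesSturmLiouville q a 0 u u') (hv : SolvesSturmLiouville q b 0 v v')
    (h0 : v 0 = u 0) (h0' : v' 0 = u' 0) (hq : ∀ s ∈ Icc 0 T, ‖q s‖ ≤ Q) (hb : ‖b‖ ≤ R)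
    (hB : ∀ s ∈ Icc 0 T, ‖u s‖ ≤ B) (ht : t ∈ Icc 0 T) :
    ‖v t - u t‖ ≤ ‖a - b‖ * B * T * exp ((1 + Q + R) * T) := by
  simpa [mul_assoc] using (hu.sub hv).norm_le hq hb (ε := ‖a - b‖ * B)
    (fun s hs => by rw [norm_mul]; gcongr; exact hB s hs) (δ := 0)
    (by simp [h0]) (by simp [h0']) ht

theorem norm_mul_norm_sub_le_of_abs_im_le (hu : SolvesSturmLiouville q a 0 u u')
    (hv : SolvesSturmLiouville q (ρ ^ 2) 0 v v') (h0 : v 0 = u 0) (h0' : v' 0 = u' 0)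
    (hq : ∀ s ∈ Icc 0 T, ‖q s‖ ≤ Q) (hρ : |ρ.im| ≤ 1) (hρ1 : 1 ≤ ‖ρ‖)
    (hB : ∀ s ∈ Icc 0 T, ‖u s‖ ≤ B) (ht : t ∈ Icc 0 T) :
    ‖ρ‖ * ‖v t - u t‖ ≤ ‖a - ρ ^ 2‖ * B * T * exp ((2 + Q * exp (2 * T)) * T) := by
  simpa [mul_assoc] using (hu.sub hv).norm_mul_norm_le_of_abs_im_le hq hρ hρ1
    (ε := ‖a - ρ ^ 2‖ * B)
    (fun s hs => by rw [norm_mul]; gcongr; exact hB s hs) (δ := 0)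
    (by simp [h0, h0']) (by simp [h0, h0']) ht

end SolvesSturmLiouville

theorem exists_norm_sub_le_of_norm_sub_natCast_le {q : ℝ → ℂ} {h : ℂ} {Q T : ℝ}
    {φ φ' : ℂ → ℝ → ℂ} (hφ : ∀ l, SolvesSturmLiouville q l 0 (φ l) (φ' l))
    (hinit : ∀ l, φ l 0 = 1 ∧ φ' l 0 = h) (hq : ∀ s ∈ Icc 0 T, ‖q s‖ ≤ Q) (hT : 0 ≤ T) :
    ∃ M, 0 ≤ M ∧ ∀ n : ℕ, 1 ≤ n → ∀ ρ ρ' : ℂ, ‖ρ - n‖ ≤ 1 → ‖ρ' - n‖ ≤ 1 →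
      ∀ t ∈ Icc 0 T, ‖φ (ρ' ^ 2) t - φ (ρ ^ 2) t‖ ≤ M * ‖ρ - ρ'‖ := by
  set C₁ := (1 + ‖h‖) * exp ((1 + Q + 4) * T) * T * exp ((1 + Q + 4) * T)
  set C₂ := (1 + ‖h‖) * exp ((2 + Q * exp (2 * T)) * T) * T * exp ((2 + Q * exp (2 * T)) * T)
  refine ⟨4 * C₁ + 6 * C₂, by positivity, fun n hn ρ ρ' hρ hρ' t ht => ?_⟩
  have hsq : ‖ρ ^ 2 - ρ' ^ 2‖ = ‖ρ + ρ'‖ * ‖ρ - ρ'‖ := by rw [sq_sub_sq, norm_mul]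
  have hnorm : ∀ z : ℂ, ‖z - n‖ ≤ 1 → |‖z‖ - n| ≤ 1 := fun z hz => by
    simpa using (abs_norm_sub_norm_le z n).trans hz
  have him : ∀ z : ℂ, ‖z - n‖ ≤ 1 → |z.im| ≤ 1 := fun z hz => by
    simpa using (Complex.abs_im_le_norm (z - n)).trans hz
  obtain ⟨hρl, hρu⟩ := abs_le.1 (hnorm ρ hρ)
  obtain ⟨hρ'l, hρ'u⟩ := abs_le.1 (hnorm ρ' hρ')
  have hsum : ‖ρ + ρ'‖ ≤ 2 * n + 2 := (norm_add_le _ _).trans (by linarith)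
  have hinit₀ := (hinit (ρ' ^ 2)).1.trans (hinit (ρ ^ 2)).1.symm
  have hinit₀' := (hinit (ρ' ^ 2)).2.trans (hinit (ρ ^ 2)).2.symm
  rcases (show n = 1 ∨ 2 ≤ n by omega) with rfl | hn2
  · have hdisc : ∀ z : ℂ, ‖z‖ ≤ 2 → ‖z ^ 2‖ ≤ 4 := fun z hz => by
      rw [norm_pow]; nlinarith [norm_nonneg z]
    norm_num at hρu hρ'u hsum
    have hB := fun s (hs : s ∈ Icc 0 T) =>
      (hφ (ρ ^ 2)).norm_le_of_init (hinit _).1 (hinit _).2 hq (hdisc ρ hρu) hs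
    calc ‖φ (ρ' ^ 2) t - φ (ρ ^ 2) t‖ ≤ ‖ρ ^ 2 - ρ' ^ 2‖ * ((1 + ‖h‖) *
          exp ((1 + Q + 4) * T)) * T * exp ((1 + Q + 4) * T) :=
          (hφ _).norm_sub_le (hφ _) hinit₀ hinit₀' hq (hdisc ρ' hρ'u) hB ht
      _ = ‖ρ + ρ'‖ * C₁ * ‖ρ - ρ'‖ := by rw [hsq]; ring
      _ ≤ (4 * C₁ + 6 * C₂) * ‖ρ - ρ'‖ := by
          gcongr
          nlinarith [(by positivity : 0 ≤ C₁), (by positivity : 0 ≤ C₂)]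
  · have hn2 : (2 : ℝ) ≤ n := by exact_mod_cast hn2
    have hB := fun s (hs : s ∈ Icc 0 T) => (hφ (ρ ^ 2)).norm_le_of_init_of_abs_im_le
      (hinit _).1 (hinit _).2 hq (him ρ hρ) (by linarith) hs
    refine le_of_mul_le_mul_left ?_ (by linarith : 0 < ‖ρ'‖)
    calc ‖ρ'‖ * ‖φ (ρ' ^ 2) t - φ (ρ ^ 2) t‖ ≤ ‖ρ ^ 2 - ρ' ^ 2‖ * ((1 + ‖h‖) *
          exp ((2 + Q * exp (2 * T)) * T)) * T * exp ((2 + Q * exp (2 * T)) * T) :=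
          (hφ _).norm_mul_norm_sub_le_of_abs_im_le (hφ _) hinit₀ hinit₀' hq (him ρ' hρ')
            (by linarith) hB ht
      _ = ‖ρ + ρ'‖ * C₂ * ‖ρ - ρ'‖ := by rw [hsq]; ring
      _ ≤ 6 * ‖ρ'‖ * C₂ * ‖ρ - ρ'‖ := by gcongr; linarith
      _ ≤ ‖ρ'‖ * ((4 * C₁ + 6 * C₂) * ‖ρ - ρ'‖) := by
          rw [show 6 * ‖ρ'‖ * C₂ * ‖ρ - ρ'‖ = ‖ρ'‖ * ((0 + 6 * C₂) * ‖ρ - ρ'‖) by ring]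
          gcongr
          positivity

/-- Lipschitz-type estimate `|D(x, λ, λ̃_n) - D(x, λ, λ_n)| ≤ C |ρ_n - ρ̃_n|` for the
kernel `D(x, λ, ξ) = ∫₀ˣ φ(t,λ) φ(t,ξ) dt`, uniformly in `x ∈ [0,π]`, `λ` in a
compact set, and `n ≥ 1`. -/
theorem D_lipschitz_estimate (q : ℝ → ℂ) (h : ℂ)
    (hq : ContinuousOn q (Set.Icc 0 Real.pi))
    (φ φ' : ℂ → ℝ → ℂ)
    (hinit : ∀ l : ℂ, φ l 0 = 1 ∧ φ' l 0 = h)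
    (hode1 : ∀ l : ℂ, ∀ x : ℝ, HasDerivAt (φ l) (φ' l x) x)
    (hode2 : ∀ l : ℂ, ∀ x : ℝ, HasDerivAt (φ' l) ((q x - l) * φ l x) x)
    (K : Set ℂ) (hK : IsCompact K) :
    ∃ C > 0, ∀ x ∈ Set.Icc 0 Real.pi, ∀ l ∈ K, ∀ n : ℕ, 1 ≤ n →
      ∀ ρn ρtn : ℂ, 0 ≤ ρn.re → 0 ≤ ρtn.re →
        ‖ρn - (n : ℂ)‖ ≤ 1 → ‖ρtn - (n : ℂ)‖ ≤ 1 →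
        ‖(∫ t in (0:ℝ)..x, φ l t * φ (ρtn ^ 2) t) -
            ∫ t in (0:ℝ)..x, φ l t * φ (ρn ^ 2) t‖ ≤ C * ‖ρn - ρtn‖ := by
  obtain ⟨Q, hQ⟩ := isCompact_Icc.exists_bound_of_continuousOn hq
  obtain ⟨R, hR⟩ := hK.isBounded.exists_norm_le
  have hφ : ∀ l, SolvesSturmLiouville q l 0 (φ l) (φ' l) := fun l t =>
    ⟨hode1 l t, by simpa using hode2 l t⟩
  obtain ⟨M, hM, hlip⟩ := exists_norm_sub_le_of_norm_sub_natCast_le hφ hinit hQ pi_pos.le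
  set A := (1 + ‖h‖) * exp ((1 + Q + R) * π)
  refine ⟨π * A * M + 1, by positivity, fun x hx l hl n hn ρ ρ' _ _ hρ hρ' => ?_⟩
  have hcont : ∀ l, Continuous (φ l) := fun l =>
    continuous_iff_continuousAt.2 fun t => (hode1 l t).continuousAt
  have hint : ∀ m, IntervalIntegrable (fun t => φ l t * φ m t) MeasureTheory.volume 0 x :=
    fun m => ((hcont l).mul (hcont m)).intervalIntegrable _ _
  rw [← intervalIntegral.integral_sub (hint _) (hint _)]
  have hbound : ∀ t ∈ uIoc 0 x,
      ‖φ l t * φ (ρ' ^ 2) t - φ l t * φ (ρ ^ 2) t‖ ≤ A * (M * ‖ρ - ρ'‖) := by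
    intro t ht
    rw [uIoc_of_le hx.1] at ht
    have ht : t ∈ Icc 0 π := ⟨ht.1.le, ht.2.trans hx.2⟩
    rw [← mul_sub, norm_mul]
    exact mul_le_mul ((hφ l).norm_le_of_init (hinit l).1 (hinit l).2 hQ (hR l hl) ht)
      (hlip n hn ρ ρ' hρ hρ' t ht) (norm_nonneg _) (by positivity)
  calc _ ≤ A * (M * ‖ρ - ρ'‖) * |x - 0| :=
        intervalIntegral.norm_integral_le_of_norm_le_const hbound
    _ ≤ (π * A * M + 1) * ‖ρ - ρ'‖ := by
        rw [sub_zero, abs_of_nonneg hx.1]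
        have : 0 ≤ A * M * ‖ρ - ρ'‖ := by positivity
        nlinarith [mul_le_mul_of_nonneg_left hx.2 this, norm_nonneg (ρ - ρ')]
end
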